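/- arXiv:2405.03052 — 2 statements merged into one kernel-verified Lean document; each statement's English description precedes it below -/
import Mathlib

section
/- Suppose the random variable V_m = m^{1/2} · W(Q_m, Q̂_m) forms a tight sequence, i.e., for every ε > 0 there exists M > 0 such that P(V_m > M) < ε for all m. If Δ_m → ∞ and λ_m converges to a finite limit λ as m → ∞, then P(m^{1/2} · W(P_θ, Q̂_m) ≥ λ_m) → 1, where m^{1/2} · W(P_θ, Q_m) ≥ Δ_m for all m. -/
open MeasureTheory Filter

/-- Theorem 3.1, Uniform Consistency: if the sequence
`V_m = √m · W(Q_m, Q̂_m)` is tight, `Δ_m → ∞`, `λ_m → λ` finite, and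
`√m · W(Pθ, Q_m) ≥ Δ_m` for all `m`, then the power
`P(√m · W(Pθ, Q̂_m) ≥ λ_m) → 1`. -/
theorem wasserstein_test_uniform_consistency {d : ℕ} {Ω : Type*} [MeasurableSpace Ω]
    (μ : Measure Ω) [IsProbabilityMeasure μ]
    (W : ProbabilityMeasure (Fin d → ℝ) → ProbabilityMeasure (Fin d → ℝ) → ℝ)
    (Wsymm : ∀ P Q, W P Q = W Q P)
    (Wtriangle : ∀ P Q R, W P R ≤ W P Q + W Q R)
    (Wnonneg : ∀ P Q, 0 ≤ W P Q)
    (Pθ : ProbabilityMeasure (Fin d → ℝ))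
    (Q : ℕ → ProbabilityMeasure (Fin d → ℝ))
    (Qhat : ℕ → Ω → ProbabilityMeasure (Fin d → ℝ))
    (Δ lam : ℕ → ℝ) (lamLim : ℝ)
    (htight : ∀ ε > (0:ℝ), ∃ M > (0:ℝ), ∀ m : ℕ,
      (μ {ω | Real.sqrt m * W (Q m) (Qhat m ω) > M}).toReal < ε)
    (hΔ : Tendsto Δ atTop atTop)
    (hlam : Tendsto lam atTop (nhds lamLim))
    (hsep : ∀ m : ℕ, Real.sqrt m * W Pθ (Q m) ≥ Δ m) :
    Tendsto (fun m : ℕ => (μ {ω | Real.sqrt m * W Pθ (Qhat m ω) ≥ lam m}).toReal)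
      atTop (nhds 1) := by
  rw [Metric.tendsto_atTop]
  intro ε hε
  obtain ⟨M, hM, htM⟩ := htight ε hε
  have h1 : ∀ᶠ m in atTop, lam m < lamLim + 1 :=
    hlam.eventually (gt_mem_nhds (lt_add_one lamLim))
  have h2 : ∀ᶠ m in atTop, Δ m > M + lamLim + 1 :=
    hΔ.eventually_gt_atTop (M + lamLim + 1)
  obtain ⟨N, hN⟩ := eventually_atTop.mp (h1.and h2)
  refine ⟨N, fun m hm => ?_⟩
  obtain ⟨hlam', hΔ'⟩ := hN m hm
  set A : Set Ω := {ω | Real.sqrt m * W Pθ (Qhat m ω) ≥ lam m} with hA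
  have hsub : Aᶜ ⊆ {ω | Real.sqrt m * W (Q m) (Qhat m ω) > M} := by
    intro ω hω
    simp only [hA, Set.mem_compl_iff, Set.mem_setOf_eq, not_le] at hω
    have hs : (0:ℝ) ≤ Real.sqrt m := Real.sqrt_nonneg _
    have htri : Real.sqrt m * W Pθ (Q m) ≤
        Real.sqrt m * W Pθ (Qhat m ω) + Real.sqrt m * W (Q m) (Qhat m ω) := by
      have := Wtriangle Pθ (Qhat m ω) (Q m)
      rw [Wsymm (Qhat m ω) (Q m)] at this
      nlinarith [mul_le_mul_of_nonneg_left this hs]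
    have hsep' := hsep m
    show M < Real.sqrt m * W (Q m) (Qhat m ω)
    linarith
  have hle : μ Aᶜ ≤ μ {ω | Real.sqrt m * W (Q m) (Qhat m ω) > M} := measure_mono hsub
  have hcompl : (μ Aᶜ).toReal < ε :=
    lt_of_le_of_lt (ENNReal.toReal_mono (measure_ne_top μ _) hle) (htM m)
  have hunion : (1:ENNReal) ≤ μ A + μ Aᶜ := by
    calc (1:ENNReal) = μ Set.univ := (measure_univ).symm
    _ = μ (A ∪ Aᶜ) := by rw [Set.union_compl_self]
    _ ≤ μ A + μ Aᶜ := measure_union_le _ _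
  have hfA : μ A ≠ ⊤ := measure_ne_top μ _
  have hfAc : μ Aᶜ ≠ ⊤ := measure_ne_top μ _
  have hunion' : (1:ℝ) ≤ (μ A).toReal + (μ Aᶜ).toReal := by
    have := ENNReal.toReal_mono (by finiteness) hunion
    rwa [ENNReal.toReal_one, ENNReal.toReal_add hfA hfAc] at this
  have hle1 : (μ A).toReal ≤ 1 := by
    simpa using ENNReal.toReal_mono (by norm_num) (prob_le_one (μ := μ) (s := A))
  rw [Real.dist_eq, abs_of_nonpos (by linarith)]
  linarith
end

section
/- For probability measures P, Q on a common space, the total variation distance satisfies Pinsker's inequality: d_TV(P, Q) ≤ sqrt(0.5 · d_KL(P, Q)), where d_KL is the Kullback–Leibler divergence. -/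
open MeasureTheory
open scoped ENNReal

/-- Total variation distance: sup over measurable sets of |P(A) − Q(A)|. -/
noncomputable def tvDist {α : Type*} [MeasurableSpace α] (P Q : Measure α) : ℝ :=
  ⨆ A : {A : Set α // MeasurableSet A}, |(P A).toReal - (Q A).toReal|

open Classical in
/-- Kullback–Leibler divergence, `∞` when `P` is not absolutely continuous
w.r.t. `Q` (or the log-likelihood ratio is not integrable). -/
noncomputable def klDiv {α : Type*} [MeasurableSpace α] (P Q : Measure α) : ℝ≥0∞ :=
  if P ≪ Q ∧ Integrable (llr P Q) P then ENNReal.ofReal (∫ x, llr P Q x ∂P) else ⊤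

/-
Pinsker via a pointwise inequality: with `klFun t = t log t + 1 - t`, one has
`3 (t - 1)² ≤ (2t + 4) klFun t` for `t ≥ 0`, hence `2c|t - 1| ≤ c² (2t + 4)/3 + klFun t`
for every constant `c`. Putting `t = dP/dQ`, integrating against `Q` (where `(2t + 4)/3` has
mass `2` and `klFun t` has mass `KL(P, Q)`) and choosing `c = ‖dP/dQ - 1‖₁ / 2` gives
`‖dP/dQ - 1‖₁² ≤ 2 KL(P, Q)`, while `d_TV(P, Q) ≤ ‖dP/dQ - 1‖₁ / 2` because `dP/dQ - 1`
has integral zero.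
-/
open Real Set
open InformationTheory (klFun)

lemma monotoneOn_add_one_mul_log_sub_two_mul_sub_one :
    MonotoneOn (fun t : ℝ ↦ (t + 1) * log t - 2 * (t - 1)) (Ioi 0) := by
  refine monotoneOn_of_hasDerivWithinAt_nonneg (convex_Ioi 0) (f' := fun t ↦ log t + t⁻¹ - 1)
    (by fun_prop (disch := grind)) (fun t ht ↦ ?_) (fun t ht ↦ ?_) <;> rw [interior_Ioi] at ht
  · have hderiv := (((hasDerivAt_id' t).add_const 1).mul (hasDerivAt_log ht.ne')).sub
      (((hasDerivAt_id' t).sub_const 1).const_mul 2)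
    exact (hderiv.congr_deriv (by rw [add_mul, mul_inv_cancel₀ ht.ne']; ring)).hasDerivWithinAt
  · linarith [one_sub_inv_le_log_of_pos ht]

lemma three_mul_sq_sub_one_le_mul_klFun {t : ℝ} (ht : 0 ≤ t) :
    3 * (t - 1) ^ 2 ≤ (2 * t + 4) * klFun t := by
  set H : ℝ → ℝ := fun t ↦ (2 * t + 4) * klFun t - 3 * (t - 1) ^ 2
  have hH : Continuous H := by fun_prop [InformationTheory.continuous_klFun]
  set F : ℝ → ℝ := fun x ↦ (x + 1) * log x - 2 * (x - 1)
  have hH' : ∀ x, 0 < x → HasDerivAt H (4 * F x) x := by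
    intro x hx
    have hderiv := (((hasDerivAt_id' x).const_mul 2).add_const 4).mul
      (InformationTheory.hasDerivAt_klFun hx.ne') |>.sub
      ((((hasDerivAt_id' x).sub_const 1).pow 2).const_mul 3)
    exact hderiv.congr_deriv (by simp only [InformationTheory.klFun_apply]; ring)
  -- `H' = 4 F` and `F` has the sign of `x - 1`, so `H` is minimal at `1`
  have hF : MonotoneOn F (Ioi 0) := monotoneOn_add_one_mul_log_sub_two_mul_sub_one
  have hF1 : F 1 = 0 := by simp [F]
  suffices H 1 ≤ H t by simpa [H, InformationTheory.klFun_one] using this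
  rcases le_total t 1 with h1 | h1
  · refine antitoneOn_of_hasDerivWithinAt_nonpos (convex_Icc 0 1) hH.continuousOn
      (f' := (4 * F ·)) (fun x hx ↦ ?_) (fun x hx ↦ ?_) ⟨ht, h1⟩ ⟨zero_le_one, le_rfl⟩ h1 <;>
      rw [interior_Icc] at hx
    · exact (hH' x hx.1).hasDerivWithinAt
    · linarith [hF hx.1 (mem_Ioi.2 one_pos) hx.2.le]
  · refine monotoneOn_of_hasDerivWithinAt_nonneg (convex_Ici 1) hH.continuousOn
      (f' := (4 * F ·)) (fun x hx ↦ ?_) (fun x hx ↦ ?_) self_mem_Ici h1 h1 <;>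
      rw [interior_Ici] at hx
    · exact (hH' x (one_pos.trans hx)).hasDerivWithinAt
    · linarith [hF (mem_Ioi.2 one_pos) (mem_Ioi.2 (one_pos.trans hx)) hx.le]

lemma two_mul_mul_abs_sub_one_le_add_klFun {t : ℝ} (ht : 0 ≤ t) (c : ℝ) :
    2 * c * |t - 1| ≤ c ^ 2 * ((2 * t + 4) / 3) + klFun t := by
  have hsq := three_mul_sq_sub_one_le_mul_klFun ht
  nlinarith [sq_nonneg (c * (2 * t + 4) - 3 * |t - 1|), sq_abs (t - 1)]

section

variable {α : Type*} [MeasurableSpace α]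

lemma abs_setIntegral_le_half_integral_abs {μ : Measure α} {f : α → ℝ} (hf : Integrable f μ)
    (hf0 : ∫ x, f x ∂μ = 0) {s : Set α} (hs : MeasurableSet s) :
    |∫ x in s, f x ∂μ| ≤ (∫ x, |f x| ∂μ) / 2 := by
  have hsplit := integral_add_compl hs hf
  have hsplit_abs := integral_add_compl hs hf.abs
  have hs_le := abs_integral_le_integral_abs (μ := μ.restrict s) (f := f)
  have hsc_le := abs_integral_le_integral_abs (μ := μ.restrict sᶜ) (f := f)
  rw [hf0, add_eq_zero_iff_eq_neg] at hsplit
  rw [hsplit, abs_neg] at hs_le ⊢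
  linarith

lemma tvDist_le_half_integral_abs_rnDeriv_sub_one {μ ν : Measure α} [IsFiniteMeasure μ]
    [IsFiniteMeasure ν] (hμν : μ ≪ ν) (h_univ : μ univ = ν univ) :
    tvDist μ ν ≤ (∫ x, |(μ.rnDeriv ν x).toReal - 1| ∂ν) / 2 := by
  have hint : Integrable (fun x ↦ (μ.rnDeriv ν x).toReal - 1) ν :=
    Measure.integrable_toReal_rnDeriv.sub (integrable_const 1)
  have hsetIntegral (s : Set α) :
      ∫ x in s, ((μ.rnDeriv ν x).toReal - 1) ∂ν = (μ s).toReal - (ν s).toReal := by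
    rw [integral_sub Measure.integrable_toReal_rnDeriv.integrableOn
      (integrable_const 1).integrableOn, Measure.setIntegral_toReal_rnDeriv hμν,
      setIntegral_const]
    simp [measureReal_def]
  have : Nonempty {s : Set α // MeasurableSet s} := ⟨⟨∅, .empty⟩⟩
  refine ciSup_le fun ⟨s, hs⟩ ↦ ?_
  rw [← hsetIntegral]
  refine abs_setIntegral_le_half_integral_abs hint ?_ hs
  rw [← setIntegral_univ, hsetIntegral, h_univ, sub_self]

lemma sq_integral_abs_rnDeriv_sub_one_le {μ ν : Measure α} [IsProbabilityMeasure μ]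
    [IsProbabilityMeasure ν] (hμν : μ ≪ ν) (h_int : Integrable (llr μ ν) μ) :
    (∫ x, |(μ.rnDeriv ν x).toReal - 1| ∂ν) ^ 2 ≤ 2 * ∫ x, llr μ ν x ∂μ := by
  set g : α → ℝ := fun x ↦ (μ.rnDeriv ν x).toReal
  set I := ∫ x, |g x - 1| ∂ν
  have hg : Integrable g ν := Measure.integrable_toReal_rnDeriv
  have hweight : Integrable (fun x ↦ (2 * g x + 4) / 3) ν :=
    ((hg.const_mul 2).add (integrable_const 4)).div_const 3
  have hklFun : Integrable (fun x ↦ klFun (g x)) ν :=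
    (InformationTheory.integrable_klFun_rnDeriv_iff hμν).2 h_int
  have h_weight : ∫ x, (2 * g x + 4) / 3 ∂ν = 2 := by
    rw [integral_div, integral_add (hg.const_mul 2) (integrable_const 4), integral_const_mul,
      Measure.integral_toReal_rnDeriv hμν]
    norm_num
  have h_klFun : ∫ x, klFun (g x) ∂ν = ∫ x, llr μ ν x ∂μ := by
    rw [InformationTheory.integral_klFun_rnDeriv hμν h_int]
    simp
  have key : I ^ 2 ≤ (I / 2) ^ 2 * 2 + ∫ x, llr μ ν x ∂μ := calc
    I ^ 2 = ∫ x, 2 * (I / 2) * |g x - 1| ∂ν := by rw [integral_const_mul]; ring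
    _ ≤ ∫ x, ((I / 2) ^ 2 * ((2 * g x + 4) / 3) + klFun (g x)) ∂ν :=
      integral_mono ((hg.sub (integrable_const 1)).abs.const_mul _)
        ((hweight.const_mul _).add hklFun)
        fun x ↦ two_mul_mul_abs_sub_one_le_add_klFun ENNReal.toReal_nonneg _
    _ = (I / 2) ^ 2 * 2 + ∫ x, llr μ ν x ∂μ := by
      rw [integral_add (hweight.const_mul _) hklFun, integral_const_mul, h_weight, h_klFun]
  linarith

lemma tvDist_le_sqrt_half_integral_llr {μ ν : Measure α} [IsProbabilityMeasure μ]
    [IsProbabilityMeasure ν] (hμν : μ ≪ ν) (h_int : Integrable (llr μ ν) μ) :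
    tvDist μ ν ≤ √((∫ x, llr μ ν x ∂μ) / 2) := by
  refine (tvDist_le_half_integral_abs_rnDeriv_sub_one hμν (by simp)).trans
    (Real.le_sqrt_of_sq_le ?_)
  linarith [sq_integral_abs_rnDeriv_sub_one_le hμν h_int]

end

/-- Pinsker's inequality: `d_TV(P,Q) ≤ √(0.5 · d_KL(P,Q))`. -/
theorem pinsker_tv_le_sqrt_kl {α : Type*} [MeasurableSpace α]
    (P Q : Measure α) [IsProbabilityMeasure P] [IsProbabilityMeasure Q] :
    ENNReal.ofReal (tvDist P Q) ≤ ((1/2 : ℝ≥0∞) * klDiv P Q) ^ (1/2 : ℝ) := by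
  rw [klDiv]
  split_ifs with h
  · obtain ⟨hPQ, h_int⟩ := h
    have hK : 0 ≤ ∫ x, llr P Q x ∂P := by
      simpa using InformationTheory.integral_llr_add_sub_measure_univ_nonneg hPQ h_int
    calc ENNReal.ofReal (tvDist P Q)
        ≤ ENNReal.ofReal √((∫ x, llr P Q x ∂P) / 2) :=
          ENNReal.ofReal_le_ofReal (tvDist_le_sqrt_half_integral_llr hPQ h_int)
      _ = ((1/2 : ℝ≥0∞) * ENNReal.ofReal (∫ x, llr P Q x ∂P)) ^ (1/2 : ℝ) := by
          rw [Real.sqrt_eq_rpow, ← ENNReal.ofReal_rpow_of_nonneg (by positivity) (by norm_num),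
            ENNReal.ofReal_div_of_pos two_pos, ENNReal.ofReal_ofNat, ENNReal.div_eq_inv_mul,
            one_div, one_div]
  · rw [ENNReal.mul_top (by norm_num), ENNReal.top_rpow_of_pos (by norm_num)]
    exact le_top
end
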